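/- Strict convexity of cross-entropy in the distribution argument along softmax parametrization up to shift: the map from the quotient of ℝ^Y by constants to ℝ given by [φ] ↦ -Σ_y r(y) log p_φ(y), for a full-support distribution r on finite Y, is strictly convex, and therefore has a unique minimizer [φ*] with p_{φ*} = r. -/

import Mathlib

/-!
Since `log (softmax φ y) = φ y - log ∑ exp φ` and `∑ r = 1`, the cross entropy is
`log ∑ exp φ - ∑ r φ`: log-sum-exp plus a linear term. Log-sum-exp commutes with adding constants,
so after normalising `∑ exp φ = ∑ exp ψ = 1` strict convexity reduces to strict convexity of
`φ ↦ ∑ exp φ`, which is strict as soon as `φ ≠ ψ`. Jensen's inequality for `exp` with weights `r`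
gives `∑ r (φ - log r) ≤ log ∑ exp φ`, i.e. `φ* = log r` is a minimizer; strict convexity makes
every other minimizer differ from it by a constant.
-/

open Real Finset

section LogSumExp

variable {Y : Type*} [Fintype Y]

noncomputable def logSumExp (φ : Y → ℝ) : ℝ := log (∑ y, exp (φ y))

noncomputable def softmax (φ : Y → ℝ) (y : Y) : ℝ := exp (φ y) / ∑ y', exp (φ y')

noncomputable def crossEntropy (r φ : Y → ℝ) : ℝ := -∑ y, r y * log (softmax φ y)

theorem strictConvexOn_sum_exp : StrictConvexOn ℝ Set.univ fun φ : Y → ℝ => ∑ y, exp (φ y) := by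
  refine ⟨convex_univ, fun φ _ ψ _ hne s t hs ht hst => ?_⟩
  obtain ⟨y₀, hy₀⟩ := Function.ne_iff.1 hne
  simp only [Pi.add_apply, Pi.smul_apply, smul_eq_mul, mul_sum, ← sum_add_distrib]
  exact sum_lt_sum
    (fun y _ => convexOn_exp.2 (Set.mem_univ _) (Set.mem_univ _) hs.le ht.le hst)
    ⟨y₀, mem_univ _, strictConvexOn_exp.2 (Set.mem_univ _) (Set.mem_univ _) hy₀ hs ht hst⟩

theorem softmax_log {r : Y → ℝ} (hr : ∀ y, 0 < r y) (hr₁ : ∑ y, r y = 1) (y : Y) :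
    softmax (fun y => log (r y)) y = r y := by
  simp only [softmax, exp_log (hr _), hr₁, div_one]

section Nonempty

variable [Nonempty Y]

theorem sum_exp_pos (φ : Y → ℝ) : 0 < ∑ y, exp (φ y) :=
  sum_pos (fun _ _ => exp_pos _) univ_nonempty

theorem logSumExp_add_const (φ : Y → ℝ) (c : ℝ) :
    logSumExp (fun y => φ y + c) = logSumExp φ + c := by
  simp only [logSumExp, exp_add, ← sum_mul]
  rw [log_mul (sum_exp_pos φ).ne' (exp_pos c).ne', log_exp]

theorem softmax_eq_exp_sub_logSumExp (φ : Y → ℝ) (y : Y) :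
    softmax φ y = exp (φ y - logSumExp φ) := by
  rw [softmax, logSumExp, exp_sub, exp_log (sum_exp_pos φ)]

theorem log_softmax (φ : Y → ℝ) (y : Y) : log (softmax φ y) = φ y - logSumExp φ := by
  rw [softmax_eq_exp_sub_logSumExp, log_exp]

theorem sum_softmax (φ : Y → ℝ) : ∑ y, softmax φ y = 1 := by
  simp only [softmax, ← sum_div]
  exact div_self (sum_exp_pos φ).ne'

theorem logSumExp_convex_comb_lt {φ ψ : Y → ℝ} (h : ¬∃ c : ℝ, ∀ y, φ y - ψ y = c)
    {t : ℝ} (ht : 0 < t) (ht₁ : t < 1) :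
    logSumExp (fun y => t * φ y + (1 - t) * ψ y) < t * logSumExp φ + (1 - t) * logSumExp ψ := by
  set a : Y → ℝ := fun y => φ y - logSumExp φ
  set b : Y → ℝ := fun y => ψ y - logSumExp ψ
  have hab : a ≠ b := fun hab => h ⟨logSumExp φ - logSumExp ψ, fun y => by
    have := congrFun hab y
    simp only [a, b] at this
    linarith⟩
  have hsum : ∀ χ : Y → ℝ, ∑ y, exp (χ y - logSumExp χ) = 1 := fun χ => by
    simpa only [softmax_eq_exp_sub_logSumExp] using sum_softmax χ
  have hnormalized : ∑ y, exp (t * a y + (1 - t) * b y) < 1 := by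
    have := strictConvexOn_sum_exp.2 (Set.mem_univ a) (Set.mem_univ b) hab ht
      (show 0 < 1 - t by linarith) (by ring)
    simpa only [Pi.add_apply, Pi.smul_apply, smul_eq_mul, a, b, hsum, mul_one,
      add_sub_cancel] using this
  have hsplit : (fun y => t * φ y + (1 - t) * ψ y) =
      fun y => (t * a y + (1 - t) * b y) + (t * logSumExp φ + (1 - t) * logSumExp ψ) := by
    ext y
    simp only [a, b]
    ring
  rw [hsplit, logSumExp_add_const]
  have : logSumExp (fun y => t * a y + (1 - t) * b y) < 0 :=
    log_neg (sum_exp_pos _) hnormalized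
  linarith

theorem sum_mul_sub_log_le_logSumExp {r : Y → ℝ} (hr : ∀ y, 0 < r y) (hr₁ : ∑ y, r y = 1)
    (φ : Y → ℝ) : ∑ y, r y * (φ y - log (r y)) ≤ logSumExp φ := by
  rw [logSumExp, le_log_iff_exp_le (sum_exp_pos φ)]
  calc exp (∑ y, r y * (φ y - log (r y)))
      ≤ ∑ y, r y * exp (φ y - log (r y)) :=
        convexOn_exp.map_sum_le (fun y _ => (hr y).le) hr₁ (fun _ _ => Set.mem_univ _)
    _ = ∑ y, exp (φ y) := sum_congr rfl fun y _ => by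
        rw [exp_sub, exp_log (hr y), mul_div_cancel₀ _ (hr y).ne']

variable {r : Y → ℝ}

theorem crossEntropy_eq (hr₁ : ∑ y, r y = 1) (φ : Y → ℝ) :
    crossEntropy r φ = logSumExp φ - ∑ y, r y * φ y := by
  simp only [crossEntropy, log_softmax, mul_sub, sum_sub_distrib, ← sum_mul, hr₁]
  ring

theorem crossEntropy_convex_comb_lt (hr₁ : ∑ y, r y = 1) {φ ψ : Y → ℝ}
    (h : ¬∃ c : ℝ, ∀ y, φ y - ψ y = c) {t : ℝ} (ht : 0 < t) (ht₁ : t < 1) :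
    crossEntropy r (fun y => t * φ y + (1 - t) * ψ y) <
      t * crossEntropy r φ + (1 - t) * crossEntropy r ψ := by
  simp only [crossEntropy_eq hr₁]
  have hlinear : ∑ y, r y * (t * φ y + (1 - t) * ψ y) =
      t * ∑ y, r y * φ y + (1 - t) * ∑ y, r y * ψ y := by
    simp only [mul_sum, ← sum_add_distrib]
    exact sum_congr rfl fun y _ => by ring
  linarith [logSumExp_convex_comb_lt h ht ht₁]

theorem crossEntropy_add_const (r φ : Y → ℝ) (c : ℝ) :
    crossEntropy r (fun y => φ y + c) = crossEntropy r φ := by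
  simp only [crossEntropy, log_softmax, logSumExp_add_const, add_sub_add_right_eq_sub]

theorem crossEntropy_log_le (hr : ∀ y, 0 < r y) (hr₁ : ∑ y, r y = 1) (ψ : Y → ℝ) :
    crossEntropy r (fun y => log (r y)) ≤ crossEntropy r ψ := by
  have hself : crossEntropy r (fun y => log (r y)) = -∑ y, r y * log (r y) := by
    simp only [crossEntropy, softmax_log hr hr₁]
  have := sum_mul_sub_log_le_logSumExp hr hr₁ ψ
  simp only [mul_sub, sum_sub_distrib] at this
  rw [hself, crossEntropy_eq hr₁]
  linarith

theorem exists_const_of_crossEntropy_minimizers (hr₁ : ∑ y, r y = 1) {φ ψ : Y → ℝ}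
    (hφ : ∀ χ, crossEntropy r φ ≤ crossEntropy r χ)
    (hψ : ∀ χ, crossEntropy r ψ ≤ crossEntropy r χ) : ∃ c : ℝ, ∀ y, φ y = ψ y + c := by
  by_contra hne
  have hne' : ¬∃ c : ℝ, ∀ y, φ y - ψ y = c := by
    simpa only [sub_eq_iff_eq_add'] using hne
  have hmid := crossEntropy_convex_comb_lt hr₁ hne' (t := 1 / 2) (by norm_num) (by norm_num)
  linarith [hφ (fun y => 1 / 2 * φ y + (1 - 1 / 2) * ψ y), hψ φ]

end Nonempty

end LogSumExp

theorem cross_entropy_strictly_convex_mod_constants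
    {Y : Type*} [Fintype Y] [Nonempty Y]
    (r : Y → ℝ) (hr_pos : ∀ y, 0 < r y) (hr_sum : ∑ y, r y = 1) :
    let softmax : (Y → ℝ) → Y → ℝ :=
      fun φ y => Real.exp (φ y) / ∑ y', Real.exp (φ y')
    let f : (Y → ℝ) → ℝ := fun φ => -∑ y, r y * Real.log (softmax φ y)
    (∀ φ ψ : Y → ℝ, (¬ ∃ c : ℝ, ∀ y, φ y - ψ y = c) →
      ∀ t : ℝ, 0 < t → t < 1 →
        f (fun y => t * φ y + (1 - t) * ψ y) < t * f φ + (1 - t) * f ψ) ∧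
    (∃ φstar : Y → ℝ, (∀ y, softmax φstar y = r y) ∧
      ∀ φ : Y → ℝ, (∀ ψ : Y → ℝ, f φ ≤ f ψ) ↔ ∃ c : ℝ, ∀ y, φ y = φstar y + c) := by
  intro softmax f
  refine ⟨fun φ ψ h t ht ht₁ => crossEntropy_convex_comb_lt hr_sum h ht ht₁,
    fun y => log (r y), softmax_log hr_pos hr_sum, fun φ => ⟨fun hmin => ?_, ?_⟩⟩
  · exact exists_const_of_crossEntropy_minimizers hr_sum hmin (crossEntropy_log_le hr_pos hr_sum)
  · rintro ⟨c, hc⟩ ψ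
    have hφ : φ = fun y => log (r y) + c := funext hc
    change crossEntropy r φ ≤ crossEntropy r ψ
    rw [hφ, crossEntropy_add_const]
    exact crossEntropy_log_le hr_pos hr_sum ψ
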